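/- arXiv:1408.6703 — 2 statements merged into one kernel-verified Lean document; each statement's English description precedes it below -/
import Mathlib

section
/- Let G be a group generated by involutions ρ₀, ρ₁, ρ₂ with (ρ₀ρ₂)² = 1, and set σ₁ = ρ₀ρ₁, σ₂ = ρ₁ρ₂. If σ₂⁻¹σ₁ = σ₁^i ρ₁ σ₂^j, then σ₂ σ₁^(i-2) σ₂⁻¹ = σ₁^(2-i); in particular ⟨σ₁^(i-2)⟩ is normal in G. -/
/-!
Cancelling in the relation gives `σ₁⁻ⁱ σ₂⁻¹ σ₁ = ρ₁ σ₂ʲ`, an involution because `ρ₁` inverts `σ₂`.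
Squaring it gives `σ₂ σ₁^(i-1) σ₂ = σ₁^(1-i)`, and together with `σ₂ σ₁ σ₂ = σ₁⁻¹`
(which is `(σ₁σ₂)² = (ρ₀ρ₂)² = 1`) this is the conjugation formula. For normality it suffices that
each generator conjugates `x = σ₁^(i-2)` to `x` or `x⁻¹`: `ρ₀` and `ρ₁` invert `σ₁`, while
`ρ₂ = ρ₁σ₂` is a product of two elements inverting `x`.
-/

open Subgroup

section

variable {G : Type*} [Group G]

theorem Subgroup.zpowers_normal_of_conj_eq_or_eq_inv {s : Set G} (hs : closure s = ⊤) {x : G}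
    (h : ∀ g ∈ s, g * x * g⁻¹ = x ∨ g * x * g⁻¹ = x⁻¹) : (zpowers x).Normal := by
  rw [← normalizer_eq_top_iff, eq_top_iff, ← hs, closure_le]
  intro g hg
  rw [SetLike.mem_coe, mem_normalizer_iff_map_conj_eq]
  rcases h g hg with h | h <;> simp [h]

theorem conj_zpow_eq_inv_of_conj_eq_inv {g y : G} (h : g * y * g⁻¹ = y⁻¹) (n : ℤ) :
    g * y ^ n * g⁻¹ = (y ^ n)⁻¹ := by
  rw [← conj_zpow, h, inv_zpow]

theorem inv_eq_self_of_sq_eq_one {a : G} (ha : a ^ 2 = 1) : a⁻¹ = a :=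
  inv_eq_of_mul_eq_one_right (by rwa [← sq])

theorem conj_mul_eq_inv_left {a b : G} (ha : a ^ 2 = 1) (hb : b ^ 2 = 1) :
    a * (a * b) * a⁻¹ = (a * b)⁻¹ := by
  rw [mul_inv_rev, inv_eq_self_of_sq_eq_one hb, ← mul_assoc, ← sq, ha, one_mul]

theorem conj_mul_eq_inv_right {a b : G} (ha : a ^ 2 = 1) (hb : b ^ 2 = 1) :
    b * (a * b) * b⁻¹ = (a * b)⁻¹ := by
  rw [mul_inv_rev, inv_eq_self_of_sq_eq_one ha, ← mul_assoc, mul_inv_cancel_right,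
    inv_eq_self_of_sq_eq_one hb]

theorem conj_zpow_sub_two {a b r : G} {i j : ℤ} (hab : (a * b) ^ 2 = 1) (hr : r ^ 2 = 1)
    (hrb : r * b * r⁻¹ = b⁻¹) (hrel : b⁻¹ * a = a ^ i * r * b ^ j) :
    b * a ^ (i - 2) * b⁻¹ = a ^ (2 - i) := by
  have hbab : b * a * b = a⁻¹ :=
    eq_inv_of_mul_eq_one_right (by simpa only [sq, mul_assoc] using hab)
  have ht : a ^ (-i) * b⁻¹ * a = r * b ^ j := by rw [mul_assoc, hrel]; group
  have ht_sq : (a ^ (-i) * b⁻¹ * a) * (a ^ (-i) * b⁻¹ * a) = 1 := by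
    calc _ = (r * b ^ j * r⁻¹) * b ^ j := by rw [ht, inv_eq_self_of_sq_eq_one hr]; group
      _ = 1 := by rw [conj_zpow_eq_inv_of_conj_eq_inv hrb, inv_mul_cancel]
  have hK : b * a ^ (i - 1) * b = a ^ (1 - i) :=
    calc _ = (a ^ i * ((a ^ (-i) * b⁻¹ * a) * (a ^ (-i) * b⁻¹ * a)) * a⁻¹)⁻¹ := by group
      _ = a ^ (1 - i) := by rw [ht_sq]; group
  calc b * a ^ (i - 2) * b⁻¹ = (b * a ^ (i - 1) * b) * (b * a * b)⁻¹ := by group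
    _ = a ^ (2 - i) := by rw [hK, hbab]; group
end

theorem stmt_4 {G : Type*} [Group G] (ρ0 ρ1 ρ2 : G)
    (h0 : ρ0 ^ 2 = 1) (h1 : ρ1 ^ 2 = 1) (h2 : ρ2 ^ 2 = 1)
    (h02 : (ρ0 * ρ2) ^ 2 = 1)
    (hgen : Subgroup.closure {ρ0, ρ1, ρ2} = ⊤)
    (σ1 σ2 : G) (hσ1 : σ1 = ρ0 * ρ1) (hσ2 : σ2 = ρ1 * ρ2)
    (i j : ℤ) (hrel : σ2⁻¹ * σ1 = σ1 ^ i * ρ1 * σ2 ^ j) :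
    σ2 * σ1 ^ (i - 2) * σ2⁻¹ = σ1 ^ (2 - i) ∧
    (Subgroup.zpowers (σ1 ^ (i - 2))).Normal := by
  have hσ1σ2 : σ1 * σ2 = ρ0 * ρ2 := by
    rw [hσ1, hσ2, mul_assoc, ← mul_assoc ρ1, ← sq, h1, one_mul]
  have hρ0σ1 : ρ0 * σ1 * ρ0⁻¹ = σ1⁻¹ := hσ1 ▸ conj_mul_eq_inv_left h0 h1
  have hρ1σ1 : ρ1 * σ1 * ρ1⁻¹ = σ1⁻¹ := hσ1 ▸ conj_mul_eq_inv_right h0 h1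
  have hρ1σ2 : ρ1 * σ2 * ρ1⁻¹ = σ2⁻¹ := hσ2 ▸ conj_mul_eq_inv_left h1 h2
  have hσ2_conj : σ2 * σ1 ^ (i - 2) * σ2⁻¹ = σ1 ^ (2 - i) :=
    conj_zpow_sub_two (hσ1σ2 ▸ h02) h1 hρ1σ2 hrel
  have hinv : σ1 ^ (2 - i) = (σ1 ^ (i - 2))⁻¹ := by rw [← zpow_neg, neg_sub]
  have hρ2 : ρ2 = ρ1 * σ2 := by rw [hσ2, ← mul_assoc, ← sq, h1, one_mul]
  have hρ2_conj : ρ2 * σ1 ^ (i - 2) * ρ2⁻¹ = σ1 ^ (i - 2) :=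
    calc _ = ρ1 * (σ2 * σ1 ^ (i - 2) * σ2⁻¹) * ρ1⁻¹ := by rw [hρ2]; group
      _ = σ1 ^ (i - 2) := by
        rw [hσ2_conj, conj_zpow_eq_inv_of_conj_eq_inv hρ1σ1, hinv, inv_inv]
  refine ⟨hσ2_conj, Subgroup.zpowers_normal_of_conj_eq_or_eq_inv hgen ?_⟩
  simp only [Set.mem_insert_iff, Set.mem_singleton_iff, forall_eq_or_imp, forall_eq]
  exact ⟨.inr (conj_zpow_eq_inv_of_conj_eq_inv hρ0σ1 _),
    .inr (conj_zpow_eq_inv_of_conj_eq_inv hρ1σ1 _), .inl hρ2_conj⟩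
end

section
/- Let G = ⟨ρ₀, ρ₁, ρ₂⟩ with each ρ_i an involution and (ρ₀ρ₂)² = 1; σ₁ = ρ₀ρ₁, σ₂ = ρ₁ρ₂. Suppose σ₂⁻¹σ₁ = σ₁^i ρ₁ σ₂^j and σ₂⁻²σ₁ = σ₁^a σ₂^b hold. Then σ₂^(b-2) = σ₂^(2-b), i.e. σ₂^(2b-4) = 1. -/
/-!
Conjugation by `ρ₁` inverts both `σ₁` and `σ₂`. Applying it to `σ₂⁻²σ₁ = σ₁^a σ₂^b` and comparing
with the original relation shows that `σ₁` commutes with `z = σ₂^(b-2)`. Hence conjugation by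
`σ₂⁻¹σ₁` fixes `z`, while conjugation by the same element written as `σ₁^i ρ₁ σ₂^j` inverts it.
-/

section

variable {G : Type*} [Group G]

lemma inv_eq_self_of_sq_eq_one_s17 {ρ : G} (hρ : ρ ^ 2 = 1) : ρ⁻¹ = ρ :=
  inv_eq_of_mul_eq_one_right (sq ρ ▸ hρ)

lemma conj_mul_self_eq_inv {ρ τ : G} (hρ : ρ ^ 2 = 1) (hτ : τ ^ 2 = 1) :
    ρ * (τ * ρ) * ρ⁻¹ = (τ * ρ)⁻¹ := by
  simp only [mul_inv_rev, inv_eq_self_of_sq_eq_one_s17 hρ, inv_eq_self_of_sq_eq_one_s17 hτ, mul_assoc,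
    ← sq, hρ, mul_one]

lemma conj_self_mul_eq_inv {ρ τ : G} (hρ : ρ ^ 2 = 1) (hτ : τ ^ 2 = 1) :
    ρ * (ρ * τ) * ρ⁻¹ = (ρ * τ)⁻¹ := by
  simp only [mul_inv_rev, inv_eq_self_of_sq_eq_one_s17 hρ, inv_eq_self_of_sq_eq_one_s17 hτ, ← mul_assoc,
    ← sq, hρ, one_mul]

lemma conj_zpow_eq_inv {g y : G} (hy : g * y * g⁻¹ = y⁻¹) (k : ℤ) :
    g * y ^ k * g⁻¹ = (y ^ k)⁻¹ := by
  rw [← conj_zpow, hy, inv_zpow]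

lemma commute_zpow_sub_two_of_conj_inv {g x y : G} {a b : ℤ} (hx : g * x * g⁻¹ = x⁻¹)
    (hy : g * y * g⁻¹ = y⁻¹) (h : y⁻¹ ^ 2 * x = x ^ a * y ^ b) : Commute x (y ^ (b - 2)) := by
  have hx' : x = y ^ (2 : ℤ) * x ^ a * y ^ b := by rw [mul_assoc, ← h]; group
  have hconj : x * y ^ (-2 : ℤ) = y ^ b * x ^ a := by
    have := congrArg (fun t => (MulAut.conj g t)⁻¹) h
    simp only [MulAut.conj_apply, map_mul, map_pow, map_zpow, map_inv, hx, hy] at this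
    convert this using 1 <;> group
  have hcomm : Commute (x ^ a) (y ^ (b - 2)) := by
    refine mul_left_cancel (a := y ^ (2 : ℤ)) ?_
    calc y ^ (2 : ℤ) * (x ^ a * y ^ (b - 2)) = x * y ^ (-2 : ℤ) := by
          conv_rhs => rw [hx']
          group
      _ = y ^ (2 : ℤ) * (y ^ (b - 2) * x ^ a) := by rw [hconj]; group
  rw [hx']
  exact ((Commute.zpow_zpow_self y 2 (b - 2)).mul_left hcomm).mul_left
    (Commute.zpow_zpow_self y b (b - 2))

lemma eq_inv_of_conj_eq_inv {g x y z : G} {i j : ℤ} (hw : y⁻¹ * x = x ^ i * g * y ^ j)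
    (hx : Commute x z) (hy : Commute y z) (hg : g * z * g⁻¹ = z⁻¹) : z = z⁻¹ :=
  calc z = y⁻¹ * x * z * (y⁻¹ * x)⁻¹ := by rw [(hy.inv_left.mul_left hx).eq, mul_inv_cancel_right]
    _ = x ^ i * (g * (y ^ j * z * (y ^ j)⁻¹) * g⁻¹) * (x ^ i)⁻¹ := by rw [hw]; group
    _ = z⁻¹ := by
      rw [(hy.zpow_left j).eq, mul_inv_cancel_right, hg, (hx.zpow_left i).inv_right.eq,
        mul_inv_cancel_right]

end

theorem stmt_17_general {G : Type*} [Group G] (ρ0 ρ1 ρ2 : G)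
    (h0 : ρ0 ^ 2 = 1) (h1 : ρ1 ^ 2 = 1) (h2 : ρ2 ^ 2 = 1)
    (σ1 σ2 : G) (hσ1 : σ1 = ρ0 * ρ1) (hσ2 : σ2 = ρ1 * ρ2)
    (i j a b : ℤ)
    (hrel1 : σ2⁻¹ * σ1 = σ1 ^ i * ρ1 * σ2 ^ j)
    (hrel2 : σ2⁻¹ ^ 2 * σ1 = σ1 ^ a * σ2 ^ b) :
    σ2 ^ (b - 2) = σ2 ^ (2 - b) ∧ σ2 ^ (2 * b - 4) = 1 := by
  have hσ1inv : ρ1 * σ1 * ρ1⁻¹ = σ1⁻¹ := hσ1 ▸ conj_mul_self_eq_inv h1 h0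
  have hσ2inv : ρ1 * σ2 * ρ1⁻¹ = σ2⁻¹ := hσ2 ▸ conj_self_mul_eq_inv h1 h2
  have hz : σ2 ^ (b - 2) = (σ2 ^ (b - 2))⁻¹ :=
    eq_inv_of_conj_eq_inv hrel1 (commute_zpow_sub_two_of_conj_inv hσ1inv hσ2inv hrel2)
      (Commute.self_zpow σ2 (b - 2)) (conj_zpow_eq_inv hσ2inv (b - 2))
  constructor
  · rwa [← zpow_neg, neg_sub] at hz
  · rw [show 2 * b - 4 = (b - 2) + (b - 2) by ring, zpow_add]
    exact mul_eq_one_iff_eq_inv.mpr hz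

theorem stmt_17 {G : Type*} [Group G] (ρ0 ρ1 ρ2 : G)
    (h0 : ρ0 ^ 2 = 1) (h1 : ρ1 ^ 2 = 1) (h2 : ρ2 ^ 2 = 1)
    (h02 : (ρ0 * ρ2) ^ 2 = 1)
    (hgen : Subgroup.closure {ρ0, ρ1, ρ2} = ⊤)
    (σ1 σ2 : G) (hσ1 : σ1 = ρ0 * ρ1) (hσ2 : σ2 = ρ1 * ρ2)
    (i j a b : ℤ)
    (hrel1 : σ2⁻¹ * σ1 = σ1 ^ i * ρ1 * σ2 ^ j)
    (hrel2 : σ2⁻¹ ^ 2 * σ1 = σ1 ^ a * σ2 ^ b) :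
    σ2 ^ (b - 2) = σ2 ^ (2 - b) ∧ σ2 ^ (2 * b - 4) = 1 :=
  stmt_17_general ρ0 ρ1 ρ2 h0 h1 h2 σ1 σ2 hσ1 hσ2 i j a b hrel1 hrel2
end
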